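/- arXiv:2204.10585 — 3 statements merged into one kernel-verified Lean document; each statement's English description precedes it below -/
import Mathlib

section
/- For a smooth solution x = (x_1,...,x_N) of the ODE system ẋ_i = κ Σ_{k∈N_i(t)} (x_k − x_i) with κ > 0 and arbitrary (possibly time-varying) neighbor sets N_i(t) ⊆ {1,...,N}, the convex hull of the agents is non-increasing in time: for all t ≥ t_0, conv{x_i(t) : i ∈ {1,...,N}} ⊆ conv{x_i(t_0) : i ∈ {1,...,N}}. -/
/-!
Separating a point from the convex hull of the initial positions by a continuous linear
functional `f` and a level `u` reduces the claim to a scalar one: the numbers `f (x i t) - u`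
again follow the consensus protocol and start out nonpositive, and they must stay nonpositive.
For the scalar claim, the Lyapunov function `Φ = ∑ i, (max (g i) 0) ^ 2` vanishes at `t₀` and
satisfies `Φ' ≤ 2 κ N Φ`, so Grönwall's inequality keeps it at zero.
-/

open Set Asymptotics Filter Topology

theorem hasDerivAt_max_zero_sq (x : ℝ) :
    HasDerivAt (fun y : ℝ => max y 0 ^ 2) (2 * max x 0) x := by
  have remainder_le (y : ℝ) :
      ‖max y 0 ^ 2 - max x 0 ^ 2 - (y - x) • (2 * max x 0)‖ ≤ 1 * ‖(y - x) ^ 2‖ := by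
    rw [smul_eq_mul, one_mul, Real.norm_eq_abs, Real.norm_eq_abs, abs_sq, abs_le]
    rcases le_total x 0 with hx | hx <;> rcases le_total y 0 with hy | hy <;>
      simp only [max_eq_left, max_eq_right, hx, hy] <;> constructor <;> nlinarith
  have sq_isLittleO : (fun y => (y - x) ^ 2) =o[𝓝 x] fun y => y - x :=
    (isLittleO_pow_id one_lt_two).comp_tendsto (tendsto_sub_nhds_zero_iff.2 tendsto_id)
  exact hasDerivAt_iff_isLittleO.2
    ((IsBigO.of_bound 1 (Eventually.of_forall remainder_le)).trans_isLittleO sq_isLittleO)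

theorem nonpos_of_hasDerivAt_le_mul {f f' : ℝ → ℝ} {K a b : ℝ}
    (hf : ∀ t, a ≤ t → HasDerivAt f (f' t) t) (ha : f a ≤ 0)
    (bound : ∀ t, a ≤ t → f' t ≤ K * f t) (hb : a ≤ b) : f b ≤ 0 := by
  have hcont : ContinuousOn f (Icc a b) := fun s hs =>
    (hf s hs.1).continuousAt.continuousWithinAt
  have := le_gronwallBound_of_liminf_deriv_right_le (ε := 0) hcont
    (fun s hs _ hr => (hf s hs.1).hasDerivWithinAt.liminf_right_slope_le hr) ha
    (fun s hs => by simpa using bound s hs.1) b ⟨hb, le_rfl⟩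
  rwa [gronwallBound_ε0_δ0] at this

theorem max_zero_mul_sub_le_sq (a b : ℝ) : max a 0 * (b - a) ≤ max b 0 ^ 2 := by
  rcases le_total a 0 with ha | ha <;> rcases le_total b 0 with hb | hb <;>
    simp only [max_eq_left, max_eq_right, ha, hb] <;> nlinarith [sq_nonneg (2 * a - b)]

section Consensus

variable {ι E F : Type*}
  [NormedAddCommGroup E] [NormedSpace ℝ E] [NormedAddCommGroup F] [NormedSpace ℝ F]

def IsConsensusTrajectory (κ : ℝ) (nbhd : ι → ℝ → Finset ι) (t₀ : ℝ) (x : ι → ℝ → E) :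
    Prop :=
  ∀ i t, t₀ ≤ t → HasDerivAt (x i) (κ • ∑ k ∈ nbhd i t, (x k t - x i t)) t

variable {κ t₀ : ℝ} {nbhd : ι → ℝ → Finset ι}

theorem IsConsensusTrajectory.map_sub_const {x : ι → ℝ → E}
    (hx : IsConsensusTrajectory κ nbhd t₀ x) (f : E →L[ℝ] F) (c : F) :
    IsConsensusTrajectory κ nbhd t₀ fun i s => f (x i s) - c := by
  intro i t ht
  simpa only [map_smul, map_sum, map_sub, sub_sub_sub_cancel_right, Function.comp_apply] using
    (f.hasFDerivAt.comp_hasDerivAt t (hx i t ht)).sub_const c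

theorem IsConsensusTrajectory.nonpos [Fintype ι] {g : ι → ℝ → ℝ}
    (hg : IsConsensusTrajectory κ nbhd t₀ g) (hκ : 0 ≤ κ) (h₀ : ∀ i, g i t₀ ≤ 0)
    (i : ι) {t : ℝ} (ht : t₀ ≤ t) : g i t ≤ 0 := by
  set Φ : ℝ → ℝ := fun s => ∑ j, max (g j s) 0 ^ 2
  have hΦ : ∀ s, t₀ ≤ s → HasDerivAt Φ
      (∑ j, 2 * max (g j s) 0 * (κ * ∑ k ∈ nbhd j s, (g k s - g j s))) s := fun s hs =>
    HasDerivAt.fun_sum fun j _ => (hasDerivAt_max_zero_sq (g j s)).comp s (hg j s hs)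
  have term_le (s : ℝ) (j : ι) :
      2 * max (g j s) 0 * (κ * ∑ k ∈ nbhd j s, (g k s - g j s)) ≤ 2 * κ * Φ s :=
    calc 2 * max (g j s) 0 * (κ * ∑ k ∈ nbhd j s, (g k s - g j s))
        = 2 * κ * ∑ k ∈ nbhd j s, max (g j s) 0 * (g k s - g j s) := by
          simp only [Finset.mul_sum]; exact Finset.sum_congr rfl fun _ _ => by ring
      _ ≤ 2 * κ * ∑ k ∈ nbhd j s, max (g k s) 0 ^ 2 := by
          gcongr with k; exact max_zero_mul_sub_le_sq _ _
      _ ≤ 2 * κ * Φ s := by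
          gcongr
          exact Finset.sum_le_sum_of_subset_of_nonneg (Finset.subset_univ _)
            fun _ _ _ => sq_nonneg _
  have hΦt : Φ t ≤ 0 := by
    refine nonpos_of_hasDerivAt_le_mul (K := Fintype.card ι * (2 * κ)) hΦ ?_ ?_ ht
    · exact Finset.sum_nonpos fun j _ => by rw [max_eq_right (h₀ j)]; norm_num
    · intro s _
      calc _ ≤ ∑ _j : ι, 2 * κ * Φ s := Finset.sum_le_sum fun j _ => term_le s j
        _ = _ := by rw [Finset.sum_const, Finset.card_univ, nsmul_eq_mul]; ring
  have : max (g i t) 0 ^ 2 ≤ 0 :=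
    (Finset.single_le_sum (f := fun j => max (g j t) 0 ^ 2) (fun _ _ => sq_nonneg _)
      (Finset.mem_univ i)).trans hΦt
  nlinarith [le_max_left (g i t) 0, le_max_right (g i t) 0]

theorem IsConsensusTrajectory.convexHull_range_subset [Finite ι] {x : ι → ℝ → E}
    (hx : IsConsensusTrajectory κ nbhd t₀ x) (hκ : 0 ≤ κ) {t : ℝ} (ht : t₀ ≤ t) :
    convexHull ℝ (range fun i => x i t) ⊆ convexHull ℝ (range fun i => x i t₀) := by
  have := Fintype.ofFinite ι
  set C := convexHull ℝ (range fun i => x i t₀)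
  have hC : IsClosed C := ((finite_range _).isCompact_convexHull ℝ).isClosed
  refine convexHull_min ?_ (convex_convexHull ℝ _)
  rintro _ ⟨i, rfl⟩
  by_contra hi
  obtain ⟨f, u, hfC, hfi⟩ := geometric_hahn_banach_closed_point (convex_convexHull ℝ _) hC hi
  have h₀ (j : ι) : f (x j t₀) - u ≤ 0 :=
    sub_nonpos.2 (hfC _ (subset_convexHull ℝ _ ⟨j, rfl⟩)).le
  have := (hx.map_sub_const f u).nonpos hκ h₀ i ht
  linarith

end Consensus

/-- the convex hull of the agents of the first-order consensus
protocol is non-increasing in time. -/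
theorem convexHull_shrinks
    {d N : ℕ} (κ : ℝ) (hκ : 0 < κ)
    (x : Fin N → ℝ → EuclideanSpace ℝ (Fin d))
    (Nset : Fin N → ℝ → Finset (Fin N)) (t₀ : ℝ)
    (hode : ∀ i t, t₀ ≤ t →
      HasDerivAt (x i) (κ • ∑ k ∈ Nset i t, (x k t - x i t)) t) :
    ∀ t, t₀ ≤ t →
      convexHull ℝ (Set.range fun i => x i t) ⊆
        convexHull ℝ (Set.range fun i => x i t₀) :=
  fun _ ht => IsConsensusTrajectory.convexHull_range_subset hode hκ.le ht
end

section
/- Let G be a connected undirected graph on n vertices with minimum degree at least m ≥ 2. Then the diameter of G is at most ⌊3n/(m+1)⌋ − 1. -/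
private lemma walk_length_drop {V : Type*} {G : SimpleGraph V} :
    ∀ {u v : V} (p : G.Walk u v) (n : ℕ), (p.drop n).length = p.length - n := by
  intro u v p
  induction p with
  | nil => intro n; cases n <;> simp [SimpleGraph.Walk.drop]
  | cons h q ih =>
    intro n
    cases n with
    | zero => simp [SimpleGraph.Walk.drop]
    | succ n => simpa [SimpleGraph.Walk.drop] using ih n

private lemma dist_getVert_le {V : Type*} {G : SimpleGraph V} (hconn : G.Connected) :
    ∀ {u v : V} (p : G.Walk u v) (n : ℕ), G.dist u (p.getVert n) ≤ n := by
  intro u v p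
  induction p with
  | nil =>
    intro n
    rw [SimpleGraph.Walk.getVert_of_length_le _ (Nat.zero_le n)]
    simp [SimpleGraph.dist_self]
  | @cons a b c h q ih =>
    intro n
    cases n with
    | zero => simp [SimpleGraph.dist_self]
    | succ n =>
      have h1 : G.dist a b = 1 := SimpleGraph.dist_eq_one_iff_adj.2 h
      have h2 := ih n
      have h3 : G.dist a (q.getVert n) ≤ G.dist a b + G.dist b (q.getVert n) :=
        hconn.dist_triangle
      have h4 : (SimpleGraph.Walk.cons h q).getVert (n + 1) = q.getVert n := rfl
      rw [h4]
      omega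

/-- Erdős–Pach–Pollack–Tuza: a connected graph on n vertices
with minimum degree ≥ m ≥ 2 has diameter at most ⌊3n/(m+1)⌋ − 1. -/
theorem diam_le_of_minDegree {V : Type*} [Fintype V] [DecidableEq V]
    (G : SimpleGraph V) [DecidableRel G.Adj] (m : ℕ) (hm : 2 ≤ m)
    (hconn : G.Connected) (hdeg : ∀ v : V, m ≤ G.degree v) :
    G.diam ≤ 3 * Fintype.card V / (m + 1) - 1 := by
  have : Nonempty V := hconn.nonempty
  obtain ⟨u, v, huv⟩ := G.exists_dist_eq_diam
  set d := G.diam with hd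
  obtain ⟨p, hp⟩ := hconn.exists_walk_length_eq_dist u v
  rw [huv] at hp
  -- distances along the shortest walk
  have hsep : ∀ i j : ℕ, i ≤ j → j ≤ d → j - i ≤ G.dist (p.getVert i) (p.getVert j) := by
    intro i j hij hjd
    have h1 : G.dist u (p.getVert i) ≤ i := dist_getVert_le hconn p i
    have h2 : G.dist (p.getVert j) v ≤ d - j := by
      have := SimpleGraph.dist_le (p.drop j)
      rwa [walk_length_drop, hp] at this
    have h3 : d ≤ G.dist u (p.getVert i) + G.dist (p.getVert i) (p.getVert j)
        + G.dist (p.getVert j) v := by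
      calc d = G.dist u v := (huv ▸ hd).symm ▸ huv.symm
        _ ≤ G.dist u (p.getVert j) + G.dist (p.getVert j) v := hconn.dist_triangle
        _ ≤ (G.dist u (p.getVert i) + G.dist (p.getVert i) (p.getVert j))
            + G.dist (p.getVert j) v := by
              exact Nat.add_le_add_right hconn.dist_triangle _
    omega
  -- the balls
  set S : ℕ → Finset V := fun i => insert (p.getVert (3 * i)) (G.neighborFinset (p.getVert (3 * i)))
    with hS
  have hcard : ∀ i, m + 1 ≤ (S i).card := by
    intro i
    have : (S i).card = G.degree (p.getVert (3 * i)) + 1 := by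
      rw [hS]
      simp only
      rw [Finset.card_insert_of_notMem (by simp), SimpleGraph.card_neighborFinset_eq_degree]
    rw [this]
    exact Nat.add_le_add_right (hdeg _) 1
  have hmem : ∀ i w, w ∈ S i → G.dist (p.getVert (3 * i)) w ≤ 1 := by
    intro i w hw
    rw [hS] at hw
    simp only [Finset.mem_insert, SimpleGraph.mem_neighborFinset] at hw
    rcases hw with rfl | hw
    · simp [SimpleGraph.dist_self]
    · exact le_of_eq (SimpleGraph.dist_eq_one_iff_adj.2 hw)
  have hdisj : ∀ i ∈ Finset.range (d / 3 + 1), ∀ j ∈ Finset.range (d / 3 + 1),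
      i ≠ j → Disjoint (S i) (S j) := by
    have key : ∀ i j, i < j → j ≤ d / 3 → Disjoint (S i) (S j) := by
      intro i j hij hjd
      rw [Finset.disjoint_left]
      intro w hwi hwj
      have h3j : 3 * j ≤ d := le_trans (Nat.mul_le_mul_left 3 hjd)
        (by rw [Nat.mul_comm]; exact Nat.div_mul_le_self d 3)
      have hge := hsep (3 * i) (3 * j) (by omega) h3j
      have hle : G.dist (p.getVert (3 * i)) (p.getVert (3 * j)) ≤ 2 := by
        calc G.dist (p.getVert (3 * i)) (p.getVert (3 * j))
            ≤ G.dist (p.getVert (3 * i)) w + G.dist w (p.getVert (3 * j)) := hconn.dist_triangle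
          _ ≤ 1 + 1 := Nat.add_le_add (hmem i w hwi)
              (by rw [SimpleGraph.dist_comm]; exact hmem j w hwj)
          _ = 2 := rfl
      omega
    intro i hi j hj hne
    simp only [Finset.mem_range] at hi hj
    rcases Nat.lt_or_ge i j with h | h
    · exact key i j h (by omega)
    · exact (key j i (by omega) (by omega)).symm
  -- counting
  have hcount : (d / 3 + 1) * (m + 1) ≤ Fintype.card V := by
    calc (d / 3 + 1) * (m + 1) = ∑ _i ∈ Finset.range (d / 3 + 1), (m + 1) := by
          rw [Finset.sum_const, Finset.card_range, smul_eq_mul]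
      _ ≤ ∑ i ∈ Finset.range (d / 3 + 1), (S i).card :=
          Finset.sum_le_sum fun i _ => hcard i
      _ = ((Finset.range (d / 3 + 1)).biUnion S).card := (Finset.card_biUnion hdisj).symm
      _ ≤ Fintype.card V := Finset.card_le_univ _
  -- arithmetic finish
  have h1 : (d + 1) * (m + 1) ≤ 3 * Fintype.card V := by
    have hmod : d ≤ 3 * (d / 3) + 2 := by omega
    calc (d + 1) * (m + 1) ≤ (3 * (d / 3) + 3) * (m + 1) :=
          Nat.mul_le_mul_right _ (by omega)
      _ = 3 * ((d / 3 + 1) * (m + 1)) := by ring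
      _ ≤ 3 * Fintype.card V := Nat.mul_le_mul_left 3 hcount
  have h2 : d + 1 ≤ 3 * Fintype.card V / (m + 1) :=
    (Nat.le_div_iff_mul_le (by omega)).2 h1
  omega
end

section
/- For a connected undirected graph G on n vertices with diameter D, the algebraic connectivity (second-smallest eigenvalue of the graph Laplacian) satisfies λ_2(G) ≥ 4/(D·n). -/
/-!
Write `Q(x) = x ⬝ᵥ L x = ∑_{ij ∈ E} (x i - x j)²`. Let `x` have mean zero and take its extreme
values at `u` (maximum) and `w` (minimum). Pointwise `(x i - x w)(x u - x i) ≥ 0`; summing and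
using `∑ x i = 0` gives `∑ x i² ≤ -n x u x w ≤ n (x u - x w)² / 4`. On the other hand, along a
shortest path from `u` to `w`, which has at most `D` edges, all distinct, Cauchy–Schwarz gives
`(x u - x w)² ≤ D ∑_{path edges} (x i - x j)² ≤ D Q(x)`. Together, `4 ∑ x i² ≤ D n Q(x)`.
-/

open Finset Matrix

theorem sum_sq_le_card_mul_sq_sub_div_four {ι : Type*} {s : Finset ι} {f : ι → ℝ} {a b : ℝ}
    (hf : ∑ i ∈ s, f i = 0) (ha : ∀ i ∈ s, a ≤ f i) (hb : ∀ i ∈ s, f i ≤ b) :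
    ∑ i ∈ s, f i ^ 2 ≤ #s * (b - a) ^ 2 / 4 := by
  have hpoint : ∀ i ∈ s, f i ^ 2 ≤ (a + b) * f i - a * b := fun i hi => by
    nlinarith [mul_nonneg (sub_nonneg.2 (ha i hi)) (sub_nonneg.2 (hb i hi))]
  calc ∑ i ∈ s, f i ^ 2 ≤ ∑ i ∈ s, ((a + b) * f i - a * b) := sum_le_sum hpoint
    _ = -(#s * (a * b)) := by rw [sum_sub_distrib, ← mul_sum, hf, sum_const, nsmul_eq_mul]; ring
    _ ≤ #s * (b - a) ^ 2 / 4 := by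
      nlinarith [mul_nonneg (Nat.cast_nonneg (α := ℝ) #s) (sq_nonneg (a + b))]

theorem List.sq_sum_map_le_length_mul_sum_map_sq {α : Type*} (l : List α) (f : α → ℝ) :
    (l.map f).sum ^ 2 ≤ l.length * (l.map fun a => f a ^ 2).sum := by
  simpa only [← Fin.sum_univ_fun_getElem, card_univ, Fintype.card_fin] using
    sq_sum_le_card_mul_sum_sq (s := univ) (f := fun i : Fin l.length => f l[i.1])

def Sym2.sqDiff {V : Type*} (x : V → ℝ) : Sym2 V → ℝ :=
  Sym2.lift ⟨fun i j => (x i - x j) ^ 2, fun _ _ => by ring⟩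

theorem Sym2.sqDiff_nonneg {V : Type*} (x : V → ℝ) (e : Sym2 V) : 0 ≤ Sym2.sqDiff x e := by
  induction e using Sym2.ind
  exact sq_nonneg _

namespace SimpleGraph

variable {V : Type*} {G : SimpleGraph V}

theorem Walk.sum_map_darts_sub {M : Type*} [AddCommGroup M] (x : V → M) {u v : V}
    (p : G.Walk u v) : (p.darts.map fun d => x d.fst - x d.snd).sum = x u - x v := by
  induction p with
  | nil => simp
  | cons _ _ ih => simp only [Walk.darts_cons, List.map_cons, List.sum_cons, ih]; abel

theorem Walk.IsTrail.sum_map_edges_le_sum_edgeFinset {M : Type*} [AddCommMonoid M]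
    [PartialOrder M] [IsOrderedAddMonoid M] [Fintype G.edgeSet] [DecidableEq V]
    {u v : V} {p : G.Walk u v} (hp : p.IsTrail) {g : Sym2 V → M}
    (hg : ∀ e ∈ G.edgeSet, 0 ≤ g e) :
    (p.edges.map g).sum ≤ ∑ e ∈ G.edgeFinset, g e := by
  rw [← List.sum_toFinset g hp.edges_nodup]
  refine sum_le_sum_of_subset_of_nonneg (fun e he => ?_)
    (fun e he _ => hg e (mem_edgeFinset.1 he))
  exact mem_edgeFinset.2 (p.edges_subset_edgeSet (List.mem_toFinset.1 he))

variable [Fintype V] [DecidableRel G.Adj]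

theorem sum_adj_eq_sum_darts {M : Type*} [AddCommMonoid M] (g : Sym2 V → M) :
    ∑ i, ∑ j, (if G.Adj i j then g s(i, j) else 0) = ∑ d : G.Dart, g d.edge := by
  rw [← sum_product', ← sum_filter]
  symm
  refine sum_bij' (fun d _ => d.toProd) (fun q hq => ⟨q, (mem_filter.1 hq).2⟩) ?_ ?_ ?_ ?_
    fun _ _ => rfl <;> simp

theorem sum_darts_edge_eq_two_nsmul_sum_edgeFinset [DecidableEq V] {M : Type*} [AddCommMonoid M]
    (g : Sym2 V → M) : ∑ d : G.Dart, g d.edge = 2 • ∑ e ∈ G.edgeFinset, g e := by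
  rw [← sum_fiberwise_of_maps_to (g := Dart.edge) (t := G.edgeFinset)
    (fun d _ => mem_edgeFinset.2 d.edge_mem), smul_sum]
  refine sum_congr rfl fun e he => ?_
  rw [sum_congr rfl fun d hd => congrArg g (mem_filter.1 hd).2, sum_const,
    G.dart_edge_fiber_card e (mem_edgeFinset.1 he)]

theorem sum_adj_eq_two_nsmul_sum_edgeFinset [DecidableEq V] {M : Type*} [AddCommMonoid M]
    (g : Sym2 V → M) :
    ∑ i, ∑ j, (if G.Adj i j then g s(i, j) else 0) = 2 • ∑ e ∈ G.edgeFinset, g e := by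
  rw [sum_adj_eq_sum_darts, sum_darts_edge_eq_two_nsmul_sum_edgeFinset]

theorem dotProduct_lapMatrix_mulVec_eq_sum_sqDiff [DecidableEq V] (x : V → ℝ) :
    x ⬝ᵥ G.lapMatrix ℝ *ᵥ x = ∑ e ∈ G.edgeFinset, Sym2.sqDiff x e := by
  rw [← toLinearMap₂'_apply', lapMatrix_toLinearMap₂']
  change (∑ i, ∑ j, if G.Adj i j then Sym2.sqDiff x s(i, j) else 0) / 2 = _
  rw [sum_adj_eq_two_nsmul_sum_edgeFinset, two_nsmul, add_self_div_two]

theorem Walk.IsTrail.sq_sub_le_length_mul_dotProduct_lapMatrix [DecidableEq V] {u v : V}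
    {p : G.Walk u v} (hp : p.IsTrail) (x : V → ℝ) :
    (x u - x v) ^ 2 ≤ p.length * (x ⬝ᵥ G.lapMatrix ℝ *ᵥ x) := by
  calc (x u - x v) ^ 2 = (p.darts.map fun d => x d.fst - x d.snd).sum ^ 2 := by
        rw [p.sum_map_darts_sub]
    _ ≤ p.length * (p.edges.map (Sym2.sqDiff x)).sum := by
        rw [← p.length_darts, Walk.edges, List.map_map]
        exact List.sq_sum_map_le_length_mul_sum_map_sq _ _
    _ ≤ p.length * (x ⬝ᵥ G.lapMatrix ℝ *ᵥ x) := by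
        rw [dotProduct_lapMatrix_mulVec_eq_sum_sqDiff]
        gcongr
        exact hp.sum_map_edges_le_sum_edgeFinset fun e _ => Sym2.sqDiff_nonneg x e

theorem sq_sub_le_diam_mul_dotProduct_lapMatrix [DecidableEq V] (hD : G.diam ≠ 0)
    (x : V → ℝ) (u v : V) : (x u - x v) ^ 2 ≤ G.diam * (x ⬝ᵥ G.lapMatrix ℝ *ᵥ x) := by
  have hfin := G.ediam_ne_top_of_diam_ne_zero hD
  obtain ⟨p, hp, hlen⟩ := (G.preconnected_of_ediam_ne_top hfin u v).exists_path_of_dist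
  have hQ : 0 ≤ x ⬝ᵥ G.lapMatrix ℝ *ᵥ x := by
    simpa using (G.posSemidef_lapMatrix ℝ).dotProduct_mulVec_nonneg x
  calc (x u - x v) ^ 2 ≤ p.length * (x ⬝ᵥ G.lapMatrix ℝ *ᵥ x) :=
        hp.isTrail.sq_sub_le_length_mul_dotProduct_lapMatrix x
    _ ≤ G.diam * (x ⬝ᵥ G.lapMatrix ℝ *ᵥ x) := by
        gcongr
        exact_mod_cast hlen ▸ G.dist_le_diam hfin

end SimpleGraph

theorem algebraic_connectivity_lower_bound_general
    {V : Type*} [Fintype V] [DecidableEq V]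
    (G : SimpleGraph V) [DecidableRel G.Adj]
    (v : V → ℝ) (hv : ∑ i, v i = 0) :
    4 / ((G.diam : ℝ) * (Fintype.card V : ℝ)) * ∑ i, v i ^ 2 ≤
      v ⬝ᵥ (G.lapMatrix ℝ).mulVec v := by
  rcases eq_or_ne G.diam 0 with hD | hD
  -- This case includes every disconnected graph; the left side is `0` since `x / 0 = 0`.
  · simpa [hD] using (G.posSemidef_lapMatrix ℝ).dotProduct_mulVec_nonneg v
  have := G.nontrivial_of_diam_ne_zero hD
  obtain ⟨u, -, hu⟩ := exists_max_image univ v univ_nonempty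
  obtain ⟨w, -, hw⟩ := exists_min_image univ v univ_nonempty
  have hspread := sum_sq_le_card_mul_sq_sub_div_four hv (fun i _ => hw i (mem_univ i))
    (fun i _ => hu i (mem_univ i))
  rw [card_univ] at hspread
  have hDn : (0 : ℝ) < G.diam * Fintype.card V := by
    have := Fintype.card_pos (α := V)
    have := Nat.pos_of_ne_zero hD
    positivity
  rw [div_mul_eq_mul_div, div_le_iff₀ hDn]
  calc 4 * ∑ i, v i ^ 2 ≤ Fintype.card V * (v u - v w) ^ 2 := by linarith
    _ ≤ Fintype.card V * (G.diam * (v ⬝ᵥ G.lapMatrix ℝ *ᵥ v)) := by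
        gcongr
        exact G.sq_sub_le_diam_mul_dotProduct_lapMatrix hD v u w
    _ = v ⬝ᵥ G.lapMatrix ℝ *ᵥ v * (G.diam * Fintype.card V) := by ring

/-- Mohar/McKay: the algebraic connectivity of a connected graph
on n vertices with diameter D is at least 4/(D·n), stated variationally: for
every mean-zero vector v, the Laplacian quadratic form dominates
(4/(D·n))·‖v‖². -/
theorem algebraic_connectivity_lower_bound
    {V : Type*} [Fintype V] [DecidableEq V]
    (G : SimpleGraph V) [DecidableRel G.Adj] (hconn : G.Connected)
    (v : V → ℝ) (hv : ∑ i, v i = 0) :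
    4 / ((G.diam : ℝ) * (Fintype.card V : ℝ)) * ∑ i, v i ^ 2 ≤
      v ⬝ᵥ (G.lapMatrix ℝ).mulVec v :=
  algebraic_connectivity_lower_bound_general G v hv
end
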